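/- For n ≥ 2, U symmetric positive definite n×n, and any x ∈ R^n, the random effects marginal density m(x) = ∫₀^∞ (2π)^{-(n-1)/2} det(U+τ²I)^{-1/2} (1ᵀ(U+τ²I)⁻¹1)^{-1/2} exp(-xᵀQ(τ²)x/2)·π(τ) dτ with π(τ) = √(τ²tr((U+τ²I)⁻²)) is finite (the integral converges). -/

import Mathlib

/-!
Write `V τ = U + τ² I` and pick `c ∈ (0, 1]` below every eigenvalue of `U`, so that every
eigenvalue of `V τ` is at least `c (1 + τ²)`. The exponential factor is at most `1`, because
`Q` is a Schur complement of the positive definite matrix `(V τ)⁻¹`. Diagonalising `U` gives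
`det (V τ) ≥ (c (1 + τ²))ⁿ` and `tr (V τ)⁻² ≤ n / (c (1 + τ²))²`, and Cauchy–Schwarz for the
form of `V τ` gives `n² ≤ (1ᵀ V 1) (1ᵀ V⁻¹ 1)` with `1ᵀ V 1 = 1ᵀ U 1 + n τ²`. So the square
`τ² tr V⁻² / (det V · 1ᵀ V⁻¹ 1)` of the remaining factors is `O((1 + τ²)⁻²)` as soon as
`n ≥ 2`, and the continuous integrand is dominated by a multiple of `(1 + τ²)⁻¹`.
-/

open Matrix Real MeasureTheory

namespace Matrix

theorem PosDef.add_smul_one {ι : Type*} [DecidableEq ι] {U : Matrix ι ι ℝ} (hU : U.PosDef)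
    {t : ℝ} (ht : 0 ≤ t) : (U + t • 1).PosDef :=
  hU.add_posSemidef (PosSemidef.one.smul ht)

variable {ι : Type*} [Fintype ι]

theorem IsHermitian.dotProduct_mulVec_comm {B : Matrix ι ι ℝ} (hB : B.IsHermitian)
    (x y : ι → ℝ) : y ⬝ᵥ B *ᵥ x = x ⬝ᵥ B *ᵥ y := by
  rw [dotProduct_mulVec, ← mulVec_transpose, dotProduct_comm,
    ← conjTranspose_eq_transpose_of_trivial, hB]

theorem PosSemidef.dotProduct_mulVec_sq_le {B : Matrix ι ι ℝ} (hB : B.PosSemidef)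
    (x y : ι → ℝ) : (x ⬝ᵥ B *ᵥ y) ^ 2 ≤ (x ⬝ᵥ B *ᵥ x) * (y ⬝ᵥ B *ᵥ y) := by
  have hq : ∀ t : ℝ,
      0 ≤ (y ⬝ᵥ B *ᵥ y) * (t * t) + 2 * (x ⬝ᵥ B *ᵥ y) * t + x ⬝ᵥ B *ᵥ x := fun t => by
    have := hB.dotProduct_mulVec_nonneg (x + t • y)
    simp only [star_trivial, mulVec_add, mulVec_smul, dotProduct_add, add_dotProduct,
      dotProduct_smul, smul_dotProduct, smul_eq_mul, hB.1.dotProduct_mulVec_comm x y] at this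
    linarith
  have := discrim_le_zero hq
  rw [discrim] at this
  nlinarith

theorem PosSemidef.dotProduct_mulVec_sub_smul_vecMulVec_nonneg {M : Matrix ι ι ℝ}
    (hM : M.PosSemidef) (o x : ι → ℝ) :
    0 ≤ x ⬝ᵥ (M - (o ⬝ᵥ (M *ᵥ o))⁻¹ • vecMulVec (M *ᵥ o) (M *ᵥ o)) *ᵥ x := by
  have hx : x ⬝ᵥ vecMulVec (M *ᵥ o) (M *ᵥ o) *ᵥ x = (x ⬝ᵥ M *ᵥ o) ^ 2 := by
    rw [vecMulVec_mulVec, dotProduct_smul, op_smul_eq_mul, dotProduct_comm (M *ᵥ o),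
      hM.1.dotProduct_mulVec_comm, sq]
  rw [sub_mulVec, smul_mulVec, dotProduct_sub, dotProduct_smul, hx, smul_eq_mul, sub_nonneg]
  have hs : 0 ≤ o ⬝ᵥ M *ᵥ o := by simpa using hM.dotProduct_mulVec_nonneg o
  rcases hs.eq_or_lt with h | h
  · simpa [← h] using hM.dotProduct_mulVec_nonneg x
  · rw [inv_mul_le_iff₀ h, mul_comm]
    exact hM.dotProduct_mulVec_sq_le x o

variable [DecidableEq ι]

theorem PosDef.sq_dotProduct_self_le {A : Matrix ι ι ℝ} (hA : A.PosDef) (v : ι → ℝ) :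
    (v ⬝ᵥ v) ^ 2 ≤ (v ⬝ᵥ A *ᵥ v) * (v ⬝ᵥ A⁻¹ *ᵥ v) := by
  have hAA : A *ᵥ (A⁻¹ *ᵥ v) = v := by
    rw [mulVec_mulVec, mul_nonsing_inv _ (isUnit_iff_ne_zero.mpr hA.det_pos.ne'), one_mulVec]
  have := hA.posSemidef.dotProduct_mulVec_sq_le v (A⁻¹ *ᵥ v)
  rwa [hAA, dotProduct_comm (A⁻¹ *ᵥ v)] at this

theorem PosDef.exists_pos_le_one_le_eigenvalues {U : Matrix ι ι ℝ} (hU : U.PosDef) :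
    ∃ c, 0 < c ∧ c ≤ 1 ∧ ∀ i, c ≤ hU.1.eigenvalues i := by
  set S := insert 1 (Finset.univ.image hU.1.eigenvalues)
  have hS : S.Nonempty := Finset.insert_nonempty _ _
  refine ⟨S.min' hS, ?_, S.min'_le _ (Finset.mem_insert_self _ _), fun i =>
    S.min'_le _ (Finset.mem_insert_of_mem (Finset.mem_image_of_mem _ (Finset.mem_univ i)))⟩
  rw [Finset.lt_min'_iff]
  simp [S, hU.eigenvalues_pos]

theorem det_conjStarAlgAut {R : Type*} [CommRing R] [StarRing R] (u : unitary (Matrix ι ι R))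
    (A : Matrix ι ι R) : (Unitary.conjStarAlgAut R _ u A).det = A.det := by
  rw [Unitary.conjStarAlgAut_apply, det_mul, det_mul, mul_right_comm, ← det_mul,
    Unitary.mul_star_self_of_mem u.2, det_one, one_mul]

theorem trace_conjStarAlgAut {R : Type*} [CommRing R] [StarRing R] (u : unitary (Matrix ι ι R))
    (A : Matrix ι ι R) : (Unitary.conjStarAlgAut R _ u A).trace = A.trace := by
  rw [Unitary.conjStarAlgAut_apply, trace_mul_cycle, Unitary.coe_star_mul_self, one_mul]

namespace IsHermitian

variable {U : Matrix ι ι ℝ} (hU : U.IsHermitian)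

theorem add_smul_one_eq_conjStarAlgAut (t : ℝ) :
    U + t • 1 = Unitary.conjStarAlgAut ℝ _ hU.eigenvectorUnitary
      (diagonal fun i => hU.eigenvalues i + t) := by
  conv_lhs => rw [hU.spectral_theorem]
  rw [← diagonal_add, ← smul_one_eq_diagonal, map_add, map_smul, map_one]
  rfl

theorem det_add_smul_one (t : ℝ) : (U + t • 1).det = ∏ i, (hU.eigenvalues i + t) := by
  rw [hU.add_smul_one_eq_conjStarAlgAut, det_conjStarAlgAut, det_diagonal]

theorem inv_add_smul_one {t : ℝ} (ht : ∀ i, hU.eigenvalues i + t ≠ 0) :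
    (U + t • 1)⁻¹ = Unitary.conjStarAlgAut ℝ _ hU.eigenvectorUnitary
      (diagonal fun i => (hU.eigenvalues i + t)⁻¹) := by
  refine inv_eq_left_inv ?_
  rw [hU.add_smul_one_eq_conjStarAlgAut, ← map_mul, diagonal_mul_diagonal]
  simp [ht]

theorem trace_inv_add_smul_one_sq {t : ℝ} (ht : ∀ i, hU.eigenvalues i + t ≠ 0) :
    ((U + t • 1)⁻¹ * (U + t • 1)⁻¹).trace = ∑ i, ((hU.eigenvalues i + t) ^ 2)⁻¹ := by
  rw [hU.inv_add_smul_one ht, ← map_mul, trace_conjStarAlgAut, diagonal_mul_diagonal,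
    trace_diagonal]
  simp [sq]

theorem pow_card_le_det_add_smul_one {r t : ℝ} (hr0 : 0 ≤ r)
    (hr : ∀ i, r ≤ hU.eigenvalues i + t) : r ^ Fintype.card ι ≤ (U + t • 1).det := by
  rw [hU.det_add_smul_one, ← Finset.card_univ, ← Finset.prod_const]
  exact Finset.prod_le_prod (fun _ _ => hr0) fun i _ => hr i

theorem trace_inv_add_smul_one_sq_le {r t : ℝ} (hr0 : 0 < r)
    (hr : ∀ i, r ≤ hU.eigenvalues i + t) :
    ((U + t • 1)⁻¹ * (U + t • 1)⁻¹).trace ≤ Fintype.card ι / r ^ 2 := by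
  have hpos : ∀ i, 0 < hU.eigenvalues i + t := fun i => hr0.trans_le (hr i)
  rw [hU.trace_inv_add_smul_one_sq fun i => (hpos i).ne', div_eq_mul_inv, ← nsmul_eq_mul,
    ← Finset.card_univ, ← Finset.sum_const]
  gcongr with i
  exact hr i

end IsHermitian

end Matrix

-- The final estimate, with `t = τ²`, `p = τ² tr V⁻²`, `a = det V`, `s = 1ᵀ V⁻¹ 1`, `b = 1ᵀ U 1`.
theorem div_mul_le_div_one_add_sq {n : ℕ} (hn : 2 ≤ n) {b c t p a s : ℝ} (hb : 0 < b)
    (hc : 0 < c) (ht : 0 ≤ t) (hp : p ≤ n * t / (c * (1 + t)) ^ 2)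
    (ha : (c * (1 + t)) ^ n ≤ a) (hs : (n : ℝ) ^ 2 ≤ (b + n * t) * s) :
    p / (a * s) ≤ (b + n) / (n * c ^ (n + 2)) / (1 + t) ^ 2 := by
  have hbt : 0 < b + n * t := by positivity
  have hs0 : 0 < s := pos_of_mul_pos_right (lt_of_lt_of_le (by positivity) hs) hbt.le
  have has : (c * (1 + t)) ^ n * (n ^ 2 / (b + n * t)) ≤ a * s := by
    rw [mul_div_assoc', div_le_iff₀ hbt, mul_assoc]
    exact mul_le_mul ha (mul_comm s _ ▸ hs) (by positivity) (le_trans (by positivity) ha)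
  calc p / (a * s)
      ≤ (n * t / (c * (1 + t)) ^ 2) / ((c * (1 + t)) ^ n * (n ^ 2 / (b + n * t))) :=
        div_le_div₀ (by positivity) hp (by positivity) has
    _ = t * (b + n * t) / (n * c ^ (n + 2) * (1 + t) ^ (n + 2)) := by
        rw [mul_pow, mul_pow]; field_simp; ring
    _ ≤ (1 + t) * ((b + n) * (1 + t)) / (n * c ^ (n + 2) * (1 + t) ^ 4) := by
        gcongr ?_ * ?_ / (_ * ?_)
        · linarith
        · nlinarith
        · exact pow_le_pow_right₀ (le_add_of_nonneg_right ht) (by omega)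
    _ = (b + n) / (n * c ^ (n + 2)) / (1 + t) ^ 2 := by
        field_simp

theorem Matrix.PosDef.exists_sq_mul_trace_inv_sq_div_le {ι : Type*} [Fintype ι] [DecidableEq ι]
    {U : Matrix ι ι ℝ} (hU : U.PosDef) (hι : 2 ≤ Fintype.card ι) : ∃ K, ∀ τ : ℝ,
      τ ^ 2 * ((U + τ ^ 2 • 1)⁻¹ * (U + τ ^ 2 • 1)⁻¹).trace /
        ((U + τ ^ 2 • 1).det * (1 ⬝ᵥ (U + τ ^ 2 • 1)⁻¹ *ᵥ 1)) ≤ K / (1 + τ ^ 2) ^ 2 := by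
  obtain ⟨c, hc0, hc1, hcU⟩ := hU.exists_pos_le_one_le_eigenvalues
  have ho : (1 : ι → ℝ) ≠ 0 := by
    have : Nonempty ι := Fintype.card_pos_iff.mp (by omega)
    exact one_ne_zero
  have hb : 0 < 1 ⬝ᵥ U *ᵥ 1 := by simpa using hU.dotProduct_mulVec_pos ho
  have hr : ∀ τ : ℝ, ∀ i, c * (1 + τ ^ 2) ≤ hU.1.eigenvalues i + τ ^ 2 := fun τ i => by
    nlinarith [hcU i, sq_nonneg τ]
  refine ⟨_, fun τ => div_mul_le_div_one_add_sq hι hb hc0 (sq_nonneg τ) ?_ ?_ ?_⟩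
  · calc _ ≤ τ ^ 2 * (Fintype.card ι / (c * (1 + τ ^ 2)) ^ 2) := by
          gcongr; exact hU.1.trace_inv_add_smul_one_sq_le (by positivity) (hr τ)
      _ = _ := by ring
  · exact hU.1.pow_card_le_det_add_smul_one (by positivity) (hr τ)
  · have hoo : (1 : ι → ℝ) ⬝ᵥ 1 = Fintype.card ι := by simp
    have hoVo : 1 ⬝ᵥ (U + τ ^ 2 • 1) *ᵥ 1 = 1 ⬝ᵥ U *ᵥ 1 + Fintype.card ι * τ ^ 2 := by
      rw [add_mulVec, dotProduct_add, smul_mulVec, one_mulVec, dotProduct_smul, hoo,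
        smul_eq_mul, mul_comm]
    simpa only [hoo, hoVo] using (hU.add_smul_one (sq_nonneg τ)).sq_dotProduct_self_le 1

theorem Continuous.matrix_inv {ι X 𝕜 : Type*} [Fintype ι] [DecidableEq ι] [TopologicalSpace X]
    [Field 𝕜] [TopologicalSpace 𝕜] [IsTopologicalRing 𝕜] [ContinuousInv₀ 𝕜]
    {A : X → Matrix ι ι 𝕜} (hA : Continuous A) (hdet : ∀ x, (A x).det ≠ 0) :
    Continuous fun x => (A x)⁻¹ := by
  simp_rw [inv_def, Ring.inverse_eq_inv']
  exact (hA.matrix_det.inv₀ hdet).smul hA.matrix_adjugate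

section MarginalDensity

variable {ι : Type*} [Fintype ι] [DecidableEq ι]

-- With `C = (2π)^(-(n-1)/2)`, `V τ = U + τ² I` and `o = 1` this is the integrand of `m(x)`.
noncomputable def marginalIntegrand (C : ℝ) (V : ℝ → Matrix ι ι ℝ) (o x : ι → ℝ) (τ : ℝ) : ℝ :=
  C * (V τ).det ^ (-(1 : ℝ) / 2) * (o ⬝ᵥ ((V τ)⁻¹ *ᵥ o)) ^ (-(1 : ℝ) / 2) *
    exp (-(x ⬝ᵥ (((V τ)⁻¹ - (o ⬝ᵥ ((V τ)⁻¹ *ᵥ o))⁻¹ •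
      vecMulVec ((V τ)⁻¹ *ᵥ o) ((V τ)⁻¹ *ᵥ o)) *ᵥ x)) / 2) *
    √(τ ^ 2 * ((V τ)⁻¹ * (V τ)⁻¹).trace)

variable {C : ℝ} {V : ℝ → Matrix ι ι ℝ} {o : ι → ℝ}

theorem continuous_marginalIntegrand (hV : Continuous V) (hVpos : ∀ τ, (V τ).PosDef)
    (ho : o ≠ 0) (x : ι → ℝ) : Continuous (marginalIntegrand C V o x) := by
  have hVi : Continuous fun τ => (V τ)⁻¹ := hV.matrix_inv fun τ => (hVpos τ).det_pos.ne'
  have hVio : Continuous fun τ => (V τ)⁻¹ *ᵥ o := hVi.matrix_mulVec continuous_const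
  have hs : Continuous fun τ => o ⬝ᵥ (V τ)⁻¹ *ᵥ o := continuous_const.dotProduct hVio
  have hs0 : ∀ τ, o ⬝ᵥ (V τ)⁻¹ *ᵥ o ≠ 0 := fun τ => by
    simpa using ((hVpos τ).inv.dotProduct_mulVec_pos ho).ne'
  have hQ := hVi.sub ((hs.inv₀ hs0).smul (hVio.matrix_vecMulVec hVio))
  refine (((continuous_const.mul ?_).mul ?_).mul ?_).mul ?_
  · exact hV.matrix_det.rpow_const fun τ => Or.inl (hVpos τ).det_pos.ne'
  · exact hs.rpow_const fun τ => Or.inl (hs0 τ)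
  · exact ((continuous_const.dotProduct (hQ.matrix_mulVec continuous_const)).neg.div_const 2).rexp
  · exact ((continuous_pow 2).mul (hVi.matrix_mul hVi).matrix_trace).sqrt

theorem norm_marginalIntegrand_le (hC : 0 ≤ C) {τ : ℝ} (hVτ : (V τ).PosDef) (ho : o ≠ 0)
    (x : ι → ℝ) : ‖marginalIntegrand C V o x τ‖ ≤
      C * √(τ ^ 2 * ((V τ)⁻¹ * (V τ)⁻¹).trace / ((V τ).det * (o ⬝ᵥ (V τ)⁻¹ *ᵥ o))) := by
  have ha := hVτ.det_pos
  have hs : 0 < o ⬝ᵥ (V τ)⁻¹ *ᵥ o := by simpa using hVτ.inv.dotProduct_mulVec_pos ho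
  have hE : exp (-(x ⬝ᵥ (((V τ)⁻¹ - (o ⬝ᵥ ((V τ)⁻¹ *ᵥ o))⁻¹ •
      vecMulVec ((V τ)⁻¹ *ᵥ o) ((V τ)⁻¹ *ᵥ o)) *ᵥ x)) / 2) ≤ 1 := by
    have := hVτ.inv.posSemidef.dotProduct_mulVec_sub_smul_vecMulVec_nonneg o x
    rw [exp_le_one_iff]
    linarith
  have hhalf : ∀ {y : ℝ}, 0 < y → y ^ (-(1 : ℝ) / 2) = (√y)⁻¹ := fun hy => by
    rw [neg_div, rpow_neg hy.le, sqrt_eq_rpow]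
  rw [marginalIntegrand, hhalf ha, hhalf hs, norm_of_nonneg (by positivity),
    sqrt_div' _ (by positivity), sqrt_mul ha.le]
  calc _ ≤ C * (√(V τ).det)⁻¹ * (√(o ⬝ᵥ (V τ)⁻¹ *ᵥ o))⁻¹ * 1 *
        √(τ ^ 2 * ((V τ)⁻¹ * (V τ)⁻¹).trace) := by gcongr
    _ = _ := by ring

end MarginalDensity

theorem stmt14 {n : ℕ} (hn : 2 ≤ n) (U : Matrix (Fin n) (Fin n) ℝ) (hU : U.PosDef)
    (x : Fin n → ℝ) :
    let o : Fin n → ℝ := fun _ => 1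
    let V : ℝ → Matrix (Fin n) (Fin n) ℝ := fun τ => U + τ ^ 2 • (1 : Matrix (Fin n) (Fin n) ℝ)
    let Q : ℝ → Matrix (Fin n) (Fin n) ℝ := fun τ =>
      (V τ)⁻¹ - (o ⬝ᵥ ((V τ)⁻¹ *ᵥ o))⁻¹ • vecMulVec ((V τ)⁻¹ *ᵥ o) ((V τ)⁻¹ *ᵥ o)
    let prior : ℝ → ℝ := fun τ => Real.sqrt (τ ^ 2 * ((V τ)⁻¹ * (V τ)⁻¹).trace)
    IntegrableOn
      (fun τ =>
        (2 * π) ^ (-((n : ℝ) - 1) / 2) * (V τ).det ^ (-(1 : ℝ) / 2) *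
          (o ⬝ᵥ ((V τ)⁻¹ *ᵥ o)) ^ (-(1 : ℝ) / 2) *
          Real.exp (-(x ⬝ᵥ (Q τ *ᵥ x)) / 2) * prior τ)
      (Set.Ioi (0 : ℝ)) := by
  intro o V Q prior
  have hV : ∀ τ, (V τ).PosDef := fun τ => hU.add_smul_one (sq_nonneg τ)
  have ho : o ≠ 0 := fun h => by simpa [o] using congr_fun h ⟨0, by omega⟩
  obtain ⟨K, hK⟩ := hU.exists_sq_mul_trace_inv_sq_div_le (by simpa using hn)
  set C := (2 * π) ^ (-((n : ℝ) - 1) / 2)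
  have hC : 0 ≤ C := by positivity
  refine Integrable.mono' ((integrable_inv_one_add_sq.const_mul (C * √K)).integrableOn)
    (continuous_marginalIntegrand (by fun_prop) hV ho x).aestronglyMeasurable
    (ae_of_all _ fun τ => ?_)
  calc _ ≤ _ := norm_marginalIntegrand_le hC (hV τ) ho x
    _ ≤ C * √(K / (1 + τ ^ 2) ^ 2) := by gcongr C * √?_; exact hK τ
    _ = C * √K * (1 + τ ^ 2)⁻¹ := by
        rw [sqrt_div' _ (by positivity), sqrt_sq (by positivity)]; ring
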